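/- For any separable bipartite state ρ_AB on a finite-dimensional Hilbert space, the local entropies do not exceed the global entropy: H(ρ_A) ≤ H(ρ_AB) and H(ρ_B) ≤ H(ρ_AB). -/

import Mathlib

/-!
Write the separable state as `ρ = Z Zᴴ`, where the columns of `Z` are product vectors
`x_j ⊗ y_j` with unit vectors `y_j`, i.e. `Z` is the Khatri–Rao product of `X = (x_j)` and
`Y = (y_j)`. Then `ρ_A = X Xᴴ`, while `Zᴴ Z = (Xᴴ X) ⊙ (Yᴴ Y)` is the image of `Xᴴ X` under the
unital channel with Kraus operators `diag (ȳ_j b)`. Since `A Aᴴ` and `Aᴴ A` have the same nonzero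
spectrum, `H(ρ_A) = H(Xᴴ X)` and `H(ρ) = H(Zᴴ Z)`. A unital channel cannot decrease entropy: in
eigenbases of input and output it maps the spectrum by the doubly stochastic matrix
`(∑ₖ |Kₖ i j|²)ᵢⱼ`, and `-t log t` is concave. Exchanging the factors gives the bound for `ρ_B`.
-/

open Matrix BigOperators Kronecker
open scoped Classical ComplexOrder

namespace QCap

/-- The square root of a positive semidefinite matrix, as `Matrix.PosSemidef.sqrt` was defined in
the older Mathlib. -/
noncomputable def psdSqrt {n : Type*} [Fintype n] [DecidableEq n] {A : Matrix n n ℂ}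
    (hA : A.PosSemidef) : Matrix n n ℂ :=
  hA.1.eigenvectorUnitary.1 * diagonal ((↑) ∘ (√·) ∘ hA.1.eigenvalues) *
    (star hA.1.eigenvectorUnitary : Matrix n n ℂ)

/-- Trace norm: `‖A‖₁ = tr √(AᴴA)`. -/
noncomputable def traceNorm {ι : Type*} [Fintype ι] [DecidableEq ι] (A : Matrix ι ι ℂ) : ℝ :=
  ((psdSqrt (Matrix.posSemidef_conjTranspose_mul_self A)).trace).re

/-- Trace distance `D_t(ρ,σ) = ‖ρ-σ‖₁ / 2`. -/
noncomputable def traceDist {ι : Type*} [Fintype ι] [DecidableEq ι] (ρ σ : Matrix ι ι ℂ) : ℝ :=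
  traceNorm (ρ - σ) / 2

/-- von Neumann entropy via eigenvalues, `H(ρ) = -∑ λᵢ log λᵢ`. -/
noncomputable def vnEntropy {ι : Type*} [Fintype ι] [DecidableEq ι] (ρ : Matrix ι ι ℂ) : ℝ :=
  if h : ρ.IsHermitian then ∑ i, Real.negMulLog (h.eigenvalues i) else 0

/-- A density operator: positive semidefinite with unit trace. -/
def IsDensity {ι : Type*} [Fintype ι] (ρ : Matrix ι ι ℂ) : Prop :=
  ρ.PosSemidef ∧ ρ.trace = 1

/-- Kraus condition `∑ Kᵢᴴ Kᵢ = 1` (trace preservation for a CP map). -/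
def IsKraus {ι κ α : Type*} [Fintype ι] [DecidableEq ι] [Fintype κ] [Fintype α]
    (K : κ → Matrix α ι ℂ) : Prop :=
  ∑ k, (K k)ᴴ * K k = 1

/-- Channel action `Φ(ρ) = ∑ Kᵢ ρ Kᵢᴴ`. -/
noncomputable def channelApply {ι κ α : Type*} [Fintype ι] [Fintype κ]
    (K : κ → Matrix α ι ℂ) (ρ : Matrix ι ι ℂ) : Matrix α α ℂ :=
  ∑ k, K k * ρ * (K k)ᴴ

/-- Choi state `ω_Φ = (Φ ⊗ id)(|ω⟩⟨ω|)` with `|ω⟩ = (1/√d) ∑ᵢ |ii⟩`. -/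
noncomputable def choiState {ι κ α : Type*} [Fintype ι] [DecidableEq ι] [Fintype κ]
    (K : κ → Matrix α ι ℂ) : Matrix (α × ι) (α × ι) ℂ :=
  (Fintype.card ι : ℂ)⁻¹ •
    ∑ i : ι, ∑ j : ι,
      (channelApply K (Matrix.single i j 1)) ⊗ₖ (Matrix.single i j 1)

/-- Partial trace over the first tensor factor. -/
noncomputable def ptraceFst {α β : Type*} [Fintype α]
    (M : Matrix (α × β) (α × β) ℂ) : Matrix β β ℂ :=
  Matrix.of fun i j => ∑ a, M (a, i) (a, j)

/-- Partial trace over the second tensor factor. -/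
noncomputable def ptraceSnd {α β : Type*} [Fintype β]
    (M : Matrix (α × β) (α × β) ℂ) : Matrix α α ℂ :=
  Matrix.of fun a b => ∑ i, M (a, i) (b, i)

/-- Fidelity `F(ρ,σ) = (tr √(√ρ σ √ρ))²`. -/
noncomputable def fidelity {ι : Type*} [Fintype ι] [DecidableEq ι] (ρ σ : Matrix ι ι ℂ) : ℝ :=
  if hρ : ρ.PosSemidef then
    if h : (psdSqrt hρ * σ * psdSqrt hρ).PosSemidef then (((psdSqrt h).trace).re) ^ 2 else 0
  else 0

/-- Coherent information of the channel at the maximally mixed input: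
`I(Φ) = H(Φ(π_d)) - H(ω_Φ)`. -/
noncomputable def cohInfo {ι κ α : Type*} [Fintype ι] [DecidableEq ι] [Fintype κ]
    [Fintype α] [DecidableEq α] (K : κ → Matrix α ι ℂ) : ℝ :=
  vnEntropy (channelApply K ((Fintype.card ι : ℂ)⁻¹ • (1 : Matrix ι ι ℂ)))
    - vnEntropy (choiState K)

end QCap

namespace QCap
open Matrix Kronecker

/-- A bipartite state is separable if it is a finite convex combination of
product states. -/
def IsSeparable {α β : Type*} [Fintype α] [Fintype β]
    (M : Matrix (α × β) (α × β) ℂ) : Prop :=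
  ∃ (n : ℕ) (q : Fin n → ℝ) (σ : Fin n → Matrix α α ℂ) (τ : Fin n → Matrix β β ℂ),
    (∀ k, 0 ≤ q k) ∧ (∑ k, q k = 1) ∧ (∀ k, IsDensity (σ k)) ∧ (∀ k, IsDensity (τ k)) ∧
    M = ∑ k, (q k : ℂ) • (σ k ⊗ₖ τ k)

end QCap

theorem ConcaveOn.sum_le_sum_mulVec_of_mem_doublyStochastic {n : Type*} [Fintype n]
    [DecidableEq n] {f : ℝ → ℝ} {s : Set ℝ} (hf : ConcaveOn ℝ s f) {d : Matrix n n ℝ}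
    (hd : d ∈ doublyStochastic ℝ n) {x : n → ℝ} (hx : ∀ j, x j ∈ s) :
    ∑ j, f (x j) ≤ ∑ i, f ((d *ᵥ x) i) := by
  obtain ⟨hnonneg, hrow, hcol⟩ := mem_doublyStochastic_iff_sum.mp hd
  calc ∑ j, f (x j) = ∑ i, ∑ j, d i j • f (x j) := by
        rw [Finset.sum_comm]
        simp_rw [← Finset.sum_smul, hcol, one_smul]
    _ ≤ ∑ i, f (∑ j, d i j • x j) := Finset.sum_le_sum fun i _ =>
        hf.le_map_sum (fun j _ => hnonneg i j) (hrow i) fun j _ => hx j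
    _ = ∑ i, f ((d *ᵥ x) i) := by simp [mulVec, dotProduct]

theorem Matrix.mul_conjTranspose_self_apply_self {m n : Type*} [Fintype n] (A : Matrix m n ℂ)
    (i : m) :
    (A * Aᴴ) i i = ∑ j, (Complex.normSq (A i j) : ℂ) := by
  simp [mul_apply, Complex.mul_conj]

theorem Matrix.conjTranspose_mul_self_apply_self {m n : Type*} [Fintype m] (A : Matrix m n ℂ)
    (j : n) :
    (Aᴴ * A) j j = ∑ i, (Complex.normSq (A i j) : ℂ) := by
  simp [mul_apply, ← Complex.mul_conj, mul_comm]

theorem Matrix.mul_diagonal_mul_conjTranspose_apply {m n R : Type*} [Fintype n] [DecidableEq n]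
    [CommSemiring R] [StarRing R] (U : Matrix m n R) (d : n → R) (i j : m) :
    (U * diagonal d * Uᴴ) i j = ∑ c, U i c * d c * star (U j c) := by
  rw [mul_apply]
  simp only [mul_diagonal, conjTranspose_apply]

theorem Matrix.IsHermitian.exists_unitary_eq_mul_diagonal_mul_conjTranspose {n : Type*}
    [Fintype n] [DecidableEq n] {A : Matrix n n ℂ} (hA : A.IsHermitian) :
    ∃ U ∈ unitaryGroup n ℂ, A = U * (diagonal fun i => (hA.eigenvalues i : ℂ)) * Uᴴ :=
  ⟨_, hA.eigenvectorUnitary.2, by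
    simpa [star_eq_conjTranspose, Function.comp_def] using hA.spectral_theorem⟩

theorem Matrix.PosSemidef.exists_unitary_eq_mul_diagonal_mul_conjTranspose {n : Type*}
    [Fintype n] [DecidableEq n] {A : Matrix n n ℂ} (hA : A.PosSemidef) :
    ∃ U ∈ unitaryGroup n ℂ, ∃ d : n → ℝ, 0 ≤ d ∧
      A = U * (diagonal fun i => (d i : ℂ)) * Uᴴ :=
  let ⟨U, hU, hAU⟩ := hA.1.exists_unitary_eq_mul_diagonal_mul_conjTranspose
  ⟨U, hU, _, hA.eigenvalues_nonneg, hAU⟩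

namespace QCap

section Spectrum

open Polynomial

variable {m n : Type*} [Fintype m] [DecidableEq m] [Fintype n] [DecidableEq n]

lemma vnEntropy_eq_sum_roots_charpoly {A : Matrix n n ℂ} (hA : A.IsHermitian) :
    vnEntropy A = (A.charpoly.roots.map fun z => Real.negMulLog z.re).sum := by
  simp [vnEntropy, hA, hA.roots_charpoly_eq_eigenvalues]

lemma vnEntropy_eq_of_X_pow_mul_charpoly_eq {A : Matrix m m ℂ} {B : Matrix n n ℂ}
    (hA : A.IsHermitian) (hB : B.IsHermitian) {k l : ℕ}
    (h : X ^ k * A.charpoly = X ^ l * B.charpoly) :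
    vnEntropy A = vnEntropy B := by
  have hroots := congrArg Polynomial.roots h
  rw [roots_mul (mul_ne_zero (pow_ne_zero _ X_ne_zero) A.charpoly_monic.ne_zero),
    roots_mul (mul_ne_zero (pow_ne_zero _ X_ne_zero) B.charpoly_monic.ne_zero),
    roots_X_pow, roots_X_pow] at hroots
  have := congrArg (fun s : Multiset ℂ => (s.map fun z => Real.negMulLog z.re).sum) hroots
  simpa [vnEntropy_eq_sum_roots_charpoly hA, vnEntropy_eq_sum_roots_charpoly hB,
    Multiset.nsmul_singleton] using this

lemma vnEntropy_mul_conjTranspose_comm (A : Matrix m n ℂ) :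
    vnEntropy (A * Aᴴ) = vnEntropy (Aᴴ * A) :=
  vnEntropy_eq_of_X_pow_mul_charpoly_eq (isHermitian_mul_conjTranspose_self A)
    (isHermitian_conjTranspose_mul_self A) (charpoly_mul_comm' A Aᴴ)

lemma vnEntropy_submatrix_equiv (e : m ≃ n) (A : Matrix n n ℂ) :
    vnEntropy (A.submatrix e e) = vnEntropy A := by
  by_cases hA : A.IsHermitian
  · refine vnEntropy_eq_of_X_pow_mul_charpoly_eq (hA.submatrix e) hA (k := 0) (l := 0) ?_
    rw [show A.submatrix e e = reindex e.symm e.symm A from rfl, charpoly_reindex]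
  · simp [vnEntropy, hA, isHermitian_submatrix_equiv]

end Spectrum

section Channel

variable {κ m n : Type*} [Fintype κ]

def IsUnital [Fintype n] [DecidableEq m] (K : κ → Matrix m n ℂ) : Prop :=
  ∑ k, K k * (K k)ᴴ = 1

def krausTransitionMatrix (K : κ → Matrix m n ℂ) : Matrix m n ℝ :=
  of fun i j => ∑ k, Complex.normSq (K k i j)

lemma channelApply_diagonal_apply_self [Fintype n] [DecidableEq n] (K : κ → Matrix m n ℂ)
    (x : n → ℝ) (i : m) :
    channelApply K (diagonal fun j => (x j : ℂ)) i i =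
      ((krausTransitionMatrix K *ᵥ x) i : ℂ) := by
  simp only [channelApply, Matrix.sum_apply, mul_diagonal_mul_conjTranspose_apply,
    krausTransitionMatrix, mulVec, dotProduct, of_apply]
  push_cast
  rw [Finset.sum_comm]
  refine Finset.sum_congr rfl fun j _ => ?_
  rw [Finset.sum_mul]
  refine Finset.sum_congr rfl fun k _ => ?_
  rw [Complex.normSq_eq_conj_mul_self, ← Complex.star_def]
  ring

lemma krausTransitionMatrix_mem_doublyStochastic [Fintype n] [DecidableEq n]
    {K : κ → Matrix n n ℂ} (hK : IsKraus K) (hKu : IsUnital K) :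
    krausTransitionMatrix K ∈ doublyStochastic ℝ n := by
  refine mem_doublyStochastic_iff_sum.mpr
    ⟨fun i j => Finset.sum_nonneg fun k _ => Complex.normSq_nonneg _, fun i => ?_, fun j => ?_⟩
  · have := congrFun (congrFun hKu i) i
    simp only [Matrix.sum_apply, mul_conjTranspose_self_apply_self, one_apply_eq] at this
    rw [Finset.sum_comm] at this
    exact_mod_cast this
  · have := congrFun (congrFun hK j) j
    simp only [Matrix.sum_apply, conjTranspose_mul_self_apply_self, one_apply_eq] at this
    simp only [krausTransitionMatrix, of_apply]
    rw [Finset.sum_comm]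
    exact_mod_cast this

lemma channelApply_mul_mul [Fintype m] [Fintype n] {ι p : Type*} [Fintype ι]
    (K : κ → Matrix m n ℂ) (U : Matrix p m ℂ) (V : Matrix n ι ℂ) (A : Matrix ι ι ℂ) :
    channelApply (fun k => U * K k * V) A = U * channelApply K (V * A * Vᴴ) * Uᴴ := by
  simp [channelApply, Matrix.mul_sum, Matrix.sum_mul, conjTranspose_mul, Matrix.mul_assoc]

lemma isHermitian_channelApply [Fintype m] {A : Matrix m m ℂ} (hA : A.IsHermitian)
    (K : κ → Matrix n m ℂ) : (channelApply K A).IsHermitian := by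
  simp [IsHermitian, QCap.channelApply, conjTranspose_sum, hA.eq, Matrix.mul_assoc]

section Conjugation

variable [Fintype m] [DecidableEq m] [Fintype n] [DecidableEq n] {K : κ → Matrix m n ℂ}
  {U : Matrix m m ℂ} {V : Matrix n n ℂ}

lemma IsKraus.mul_mul (hK : IsKraus K) (hU : U ∈ unitaryGroup m ℂ)
    (hV : V ∈ unitaryGroup n ℂ) :
    IsKraus fun k => U * K k * V := by
  have hUU : ∀ X : Matrix m n ℂ, Uᴴ * (U * X) = X := fun X => by
    rw [← Matrix.mul_assoc, ← star_eq_conjTranspose, Unitary.star_mul_self_of_mem hU,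
      Matrix.one_mul]
  calc ∑ k, (U * K k * V)ᴴ * (U * K k * V) = Vᴴ * (∑ k, (K k)ᴴ * K k) * V := by
        simp [Matrix.mul_sum, Matrix.sum_mul, conjTranspose_mul, Matrix.mul_assoc, hUU]
    _ = 1 := by
        rw [hK, Matrix.mul_one, ← star_eq_conjTranspose, Unitary.star_mul_self_of_mem hV]

lemma IsUnital.mul_mul (hK : IsUnital K) (hU : U ∈ unitaryGroup m ℂ)
    (hV : V ∈ unitaryGroup n ℂ) :
    IsUnital fun k => U * K k * V := by
  have hVV : ∀ X : Matrix n m ℂ, V * (Vᴴ * X) = X := fun X => by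
    rw [← Matrix.mul_assoc, ← star_eq_conjTranspose, Unitary.mul_star_self_of_mem hV,
      Matrix.one_mul]
  calc ∑ k, (U * K k * V) * (U * K k * V)ᴴ = U * (∑ k, K k * (K k)ᴴ) * Uᴴ := by
        simp [Matrix.mul_sum, Matrix.sum_mul, conjTranspose_mul, Matrix.mul_assoc, hVV]
    _ = 1 := by
        rw [hK, Matrix.mul_one, ← star_eq_conjTranspose, Unitary.mul_star_self_of_mem hU]

end Conjugation

lemma sum_negMulLog_le_of_channelApply_diagonal [Fintype n] [DecidableEq n]
    {K : κ → Matrix n n ℂ} (hK : IsKraus K) (hKu : IsUnital K) {x y : n → ℝ} (hx : 0 ≤ x)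
    (h : channelApply K (diagonal fun i => (x i : ℂ)) = diagonal fun i => (y i : ℂ)) :
    ∑ i, Real.negMulLog (x i) ≤ ∑ i, Real.negMulLog (y i) := by
  have hy : y = krausTransitionMatrix K *ᵥ x := funext fun i => by
    have h := congrFun (congrFun h i) i
    rw [channelApply_diagonal_apply_self, diagonal_apply_eq] at h
    exact_mod_cast h.symm
  rw [hy]
  exact Real.concaveOn_negMulLog.sum_le_sum_mulVec_of_mem_doublyStochastic
    (krausTransitionMatrix_mem_doublyStochastic hK hKu) hx

theorem vnEntropy_le_vnEntropy_channelApply [Fintype n] [DecidableEq n] {K : κ → Matrix n n ℂ}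
    (hK : IsKraus K) (hKu : IsUnital K) {A : Matrix n n ℂ} (hA : A.PosSemidef) :
    vnEntropy A ≤ vnEntropy (channelApply K A) := by
  have hB := isHermitian_channelApply hA.1 K
  obtain ⟨U, hU, hAU⟩ := hA.1.exists_unitary_eq_mul_diagonal_mul_conjTranspose
  obtain ⟨V, hV, hBV⟩ : ∃ V ∈ unitaryGroup n ℂ,
      Vᴴ * channelApply K A * V = diagonal fun i => (hB.eigenvalues i : ℂ) :=
    ⟨_, hB.eigenvectorUnitary.2, by
      simpa [star_eq_conjTranspose, Function.comp_def] using
        hB.conjStarAlgAut_star_eigenvectorUnitary⟩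
  have hVstar : Vᴴ ∈ unitaryGroup n ℂ := star_eq_conjTranspose V ▸ Unitary.star_mem hV
  simp only [vnEntropy, dif_pos hA.1, dif_pos hB]
  refine sum_negMulLog_le_of_channelApply_diagonal (hK.mul_mul hVstar hU)
    (hKu.mul_mul hVstar hU) hA.eigenvalues_nonneg ?_
  rw [channelApply_mul_mul, ← hAU, conjTranspose_conjTranspose, hBV]

end Channel

section KhatriRao

variable {ι m n : Type*}

def khatriRao {R : Type*} [Mul R] (X : Matrix m ι R) (Y : Matrix n ι R) : Matrix (m × n) ι R :=
  of fun p j => X p.1 j * Y p.2 j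

lemma conjTranspose_khatriRao_mul_khatriRao [Fintype m] [Fintype n] {R : Type*} [CommSemiring R]
    [StarRing R] (X : Matrix m ι R) (Y : Matrix n ι R) :
    (khatriRao X Y)ᴴ * khatriRao X Y = (Xᴴ * X) ⊙ (Yᴴ * Y) := by
  ext j k
  simp only [mul_apply, hadamard_apply, conjTranspose_apply, khatriRao, of_apply,
    Fintype.sum_prod_type, Finset.sum_mul_sum, star_mul]
  exact Finset.sum_congr rfl fun a _ => Finset.sum_congr rfl fun b _ => by ring

lemma ptraceSnd_khatriRao_mul_conjTranspose [Fintype ι] [Fintype n] (X : Matrix m ι ℂ)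
    {Y : Matrix n ι ℂ} (hY : ∀ j, (Yᴴ * Y) j j = 1) :
    ptraceSnd (khatriRao X Y * (khatriRao X Y)ᴴ) = X * Xᴴ := by
  ext a a'
  have hY' : ∀ j, ∑ b, Y b j * star (Y b j) = 1 := fun j => by
    simpa [mul_apply, mul_comm] using hY j
  simp only [ptraceSnd, of_apply, mul_apply, conjTranspose_apply, khatriRao, star_mul]
  rw [Finset.sum_comm]
  refine Finset.sum_congr rfl fun j _ => ?_
  calc ∑ b, X a j * Y b j * (star (Y b j) * star (X a' j))
      = X a j * star (X a' j) * ∑ b, Y b j * star (Y b j) := by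
        rw [Finset.mul_sum]
        exact Finset.sum_congr rfl fun b _ => by ring
    _ = X a j * star (X a' j) := by rw [hY', mul_one]

lemma hadamard_conjTranspose_mul_self_eq_channelApply [Fintype ι] [DecidableEq ι] [Fintype n]
    (A : Matrix ι ι ℂ) (Y : Matrix n ι ℂ) :
    A ⊙ (Yᴴ * Y) = channelApply (fun b => diagonal fun j => star (Y b j)) A := by
  ext j k
  simp only [hadamard_apply, channelApply, Matrix.sum_apply, diagonal_conjTranspose, mul_diagonal,
    diagonal_mul, Pi.star_apply, star_star]
  simp only [mul_apply, conjTranspose_apply, Finset.mul_sum]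
  exact Finset.sum_congr rfl fun b _ => by ring

lemma isKraus_diagonal_star [Fintype ι] [DecidableEq ι] [Fintype n] {Y : Matrix n ι ℂ}
    (hY : ∀ j, (Yᴴ * Y) j j = 1) : IsKraus fun b => diagonal fun j => star (Y b j) := by
  ext j k
  by_cases hjk : j = k
  · subst hjk
    simpa [Matrix.sum_apply, mul_apply, mul_comm] using hY j
  · simp [Matrix.sum_apply, hjk]

lemma isUnital_diagonal_star [Fintype ι] [DecidableEq ι] [Fintype n] {Y : Matrix n ι ℂ}
    (hY : ∀ j, (Yᴴ * Y) j j = 1) : IsUnital fun b => diagonal fun j => star (Y b j) := by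
  ext j k
  by_cases hjk : j = k
  · subst hjk
    simpa [Matrix.sum_apply, mul_apply, mul_comm] using hY j
  · simp [Matrix.sum_apply, hjk]

theorem vnEntropy_ptraceSnd_khatriRao_le [Fintype ι] [DecidableEq ι] [Fintype m]
    [DecidableEq m] [Fintype n] [DecidableEq n] (X : Matrix m ι ℂ) {Y : Matrix n ι ℂ}
    (hY : ∀ j, (Yᴴ * Y) j j = 1) :
    vnEntropy (ptraceSnd (khatriRao X Y * (khatriRao X Y)ᴴ)) ≤
      vnEntropy (khatriRao X Y * (khatriRao X Y)ᴴ) :=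
  calc vnEntropy (ptraceSnd (khatriRao X Y * (khatriRao X Y)ᴴ)) = vnEntropy (Xᴴ * X) := by
        rw [ptraceSnd_khatriRao_mul_conjTranspose X hY, vnEntropy_mul_conjTranspose_comm]
    _ ≤ vnEntropy (channelApply (fun b => diagonal fun j => star (Y b j)) (Xᴴ * X)) :=
        vnEntropy_le_vnEntropy_channelApply (isKraus_diagonal_star hY)
          (isUnital_diagonal_star hY) (posSemidef_conjTranspose_mul_self X)
    _ = vnEntropy (khatriRao X Y * (khatriRao X Y)ᴴ) := by
        rw [← hadamard_conjTranspose_mul_self_eq_channelApply,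
          ← conjTranspose_khatriRao_mul_khatriRao, vnEntropy_mul_conjTranspose_comm]

end KhatriRao

section Separable

variable {α β : Type*} [Fintype α] [Fintype β]

lemma IsSeparable.submatrix_prodComm {ρ : Matrix (α × β) (α × β) ℂ} (h : IsSeparable ρ) :
    IsSeparable (ρ.submatrix (Equiv.prodComm β α) (Equiv.prodComm β α)) := by
  obtain ⟨n, q, σ, τ, hq, hq1, hσ, hτ, rfl⟩ := h
  refine ⟨n, q, τ, σ, hq, hq1, hτ, hσ, ?_⟩
  ext ⟨b, a⟩ ⟨b', a'⟩
  simp [Matrix.sum_apply, mul_comm]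

variable [DecidableEq α] [DecidableEq β]

lemma IsSeparable.exists_eq_khatriRao_mul_conjTranspose {ρ : Matrix (α × β) (α × β) ℂ}
    (h : IsSeparable ρ) :
    ∃ (n : ℕ) (X : Matrix α (Fin n × α × β) ℂ) (Y : Matrix β (Fin n × α × β) ℂ),
      (∀ j, (Yᴴ * Y) j j = 1) ∧ ρ = khatriRao X Y * (khatriRao X Y)ᴴ := by
  obtain ⟨n, q, σ, τ, hq, -, hσ, hτ, rfl⟩ := h
  choose U hU s hs hσU using fun k => (hσ k).1.exists_unitary_eq_mul_diagonal_mul_conjTranspose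
  choose V hV t ht hτV using fun k => (hτ k).1.exists_unitary_eq_mul_diagonal_mul_conjTranspose
  refine ⟨n, of fun a j => √(q j.1 * s j.1 j.2.1 * t j.1 j.2.2) * U j.1 a j.2.1,
    of fun b j => V j.1 b j.2.2, fun j => ?_, ?_⟩
  · have hVV : (V j.1)ᴴ * V j.1 = 1 := (mem_unitaryGroup_iff').mp (hV j.1)
    simpa [mul_apply] using congrFun (congrFun hVV j.2.2) j.2.2
  · ext ⟨a, b⟩ ⟨a', b'⟩
    simp only [Matrix.sum_apply, Matrix.smul_apply, kroneckerMap_apply, smul_eq_mul, mul_apply,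
      conjTranspose_apply, khatriRao, of_apply, Fintype.sum_prod_type]
    refine Finset.sum_congr rfl fun k _ => ?_
    rw [hσU k, hτV k, mul_diagonal_mul_conjTranspose_apply, mul_diagonal_mul_conjTranspose_apply,
      Finset.sum_mul_sum, Finset.mul_sum]
    refine Finset.sum_congr rfl fun c _ => ?_
    rw [Finset.mul_sum]
    refine Finset.sum_congr rfl fun d _ => ?_
    have hw : 0 ≤ q k * s k c * t k d := mul_nonneg (mul_nonneg (hq k) (hs k c)) (ht k d)
    have hsqrt : star (√(q k * s k c * t k d) : ℂ) * √(q k * s k c * t k d) =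
        q k * s k c * t k d := by
      rw [Complex.star_def, Complex.conj_ofReal, ← Complex.ofReal_mul, Real.mul_self_sqrt hw]
      push_cast
      ring
    rw [star_mul, star_mul]
    linear_combination (U k a c * star (U k a' c) * V k b d * star (V k b' d)) * hsqrt.symm

theorem IsSeparable.vnEntropy_ptraceSnd_le {ρ : Matrix (α × β) (α × β) ℂ}
    (h : IsSeparable ρ) :
    vnEntropy (ptraceSnd ρ) ≤ vnEntropy ρ := by
  obtain ⟨n, X, Y, hY, rfl⟩ := h.exists_eq_khatriRao_mul_conjTranspose
  exact vnEntropy_ptraceSnd_khatriRao_le X hY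

theorem IsSeparable.vnEntropy_ptraceFst_le {ρ : Matrix (α × β) (α × β) ℂ}
    (h : IsSeparable ρ) :
    vnEntropy (ptraceFst ρ) ≤ vnEntropy ρ :=
  calc vnEntropy (ptraceFst ρ) =
        vnEntropy (ptraceSnd (ρ.submatrix (Equiv.prodComm β α) (Equiv.prodComm β α))) := rfl
    _ ≤ vnEntropy (ρ.submatrix (Equiv.prodComm β α) (Equiv.prodComm β α)) :=
        h.submatrix_prodComm.vnEntropy_ptraceSnd_le
    _ = vnEntropy ρ := vnEntropy_submatrix_equiv _ ρ

end Separable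

end QCap

open QCap Matrix in
theorem local_entropy_le_of_separable_general {α β : Type*} [Fintype α] [DecidableEq α]
    [Fintype β] [DecidableEq β]
    (ρ : Matrix (α × β) (α × β) ℂ) (hsep : IsSeparable ρ) :
    vnEntropy (ptraceSnd ρ) ≤ vnEntropy ρ ∧ vnEntropy (ptraceFst ρ) ≤ vnEntropy ρ :=
  ⟨hsep.vnEntropy_ptraceSnd_le, hsep.vnEntropy_ptraceFst_le⟩

open QCap Matrix in
/-- for a separable bipartite state the local entropies do not
exceed the global entropy. -/
theorem local_entropy_le_of_separable {α β : Type*} [Fintype α] [DecidableEq α]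
    [Fintype β] [DecidableEq β]
    (ρ : Matrix (α × β) (α × β) ℂ) (hρ : IsDensity ρ) (hsep : IsSeparable ρ) :
    vnEntropy (ptraceSnd ρ) ≤ vnEntropy ρ ∧ vnEntropy (ptraceFst ρ) ≤ vnEntropy ρ :=
  local_entropy_le_of_separable_general ρ hsep
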